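/- Let M > 0, m_e ≥ 0, κ = k + 1/2 with k ∈ ℤ, λ ∈ ℝ, z ∈ ℂ with Im z ≠ 0. Let r : ℝ → (M, ∞) be the inverse of the tortoise map u(r) = r + 2M log(r − M) − 2M²/(r − M), J = [[0, −1],[1, 0]], and P(r) = [[−κΩ(r) − m_e r γ(r), −λγ(r)],[−λγ(r), −κΩ(r) + m_e r γ(r)]] with Ω(r) = M/(r² + M²), γ(r) = (r − M)/(r² + M²). If Ξ₁, Ξ₂ : [0, ∞) → ℂ² are continuously differentiable solutions of J Ξ′(u) − P(r(u)) Ξ(u) = z Ξ(u) with ∫₀^∞ ‖Ξᵢ(u)‖² du < ∞ for i = 1, 2, then Ξ₁ and Ξ₂ are linearly dependent; the same conclusion holds for continuously differentiable square-integrable solutions on (−∞, 0]. -/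

import Mathlib

/-!
Lagrange's identity makes the Wronskian of two solutions constant, since the potential is real
symmetric. If both solutions are square integrable on a half-line, the Wronskian is dominated by an
integrable function on a set of infinite measure, so it vanishes and some nontrivial combination `Φ`
vanishes at the endpoint. For `Φ` itself, `Re (W(Φ̄, Φ) / (z̄ - z))` is a primitive of `|Φ|²` that
vanishes at the endpoint and is bounded by `|Φ|² / |z̄ - z|`. Being monotone, it would keep `|Φ|²`
bounded below on an infinite tail unless it vanishes identically; hence `|Φ|² = 0`.
-/

open Set MeasureTheory

/-- The tortoise coordinate `u(r) = r + 2M log(r − M) − 2M²/(r − M)`. -/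
noncomputable def tortoise (M r : ℝ) : ℝ :=
  r + 2 * M * Real.log (r - M) - 2 * M ^ 2 / (r - M)

/-- `Ω(r) = M/(r² + M²)`. -/
noncomputable def OmegaF (M r : ℝ) : ℝ := M / (r ^ 2 + M ^ 2)

/-- `γ(r) = (r − M)/(r² + M²)`. -/
noncomputable def gam (M r : ℝ) : ℝ := (r - M) / (r ^ 2 + M ^ 2)

/-- The potential matrix
`P(r) = [[−κΩ(r) − m_e r γ(r), −λγ(r)],[−λγ(r), −κΩ(r) + m_e r γ(r)]]`. -/
noncomputable def Pmat (M me κ lam r : ℝ) : Matrix (Fin 2) (Fin 2) ℝ :=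
  !![-(κ * OmegaF M r) - me * r * gam M r, -(lam * gam M r);
     -(lam * gam M r), -(κ * OmegaF M r) + me * r * gam M r]

/-- `Ξ` is a solution of `J Ξ′ − P(r(u)) Ξ = z Ξ` on the set `s` (with `J = [[0,−1],[1,0]]`),
written componentwise: `Ξ′₀ = zΞ₁ + P₁₀Ξ₀ + P₁₁Ξ₁` and `Ξ′₁ = −(zΞ₀ + P₀₀Ξ₀ + P₀₁Ξ₁)`. -/
def IsDiracSolutionOn (M me κ lam : ℝ) (rr : ℝ → ℝ) (z : ℂ) (Ξ : ℝ → Fin 2 → ℂ)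
    (s : Set ℝ) : Prop :=
  ∀ u ∈ s,
    HasDerivWithinAt (fun v => Ξ v 0)
      (z * Ξ u 1 + ((Pmat M me κ lam (rr u) 1 0 : ℝ) : ℂ) * Ξ u 0 +
        ((Pmat M me κ lam (rr u) 1 1 : ℝ) : ℂ) * Ξ u 1) s u ∧
    HasDerivWithinAt (fun v => Ξ v 1)
      (-(z * Ξ u 0 + ((Pmat M me κ lam (rr u) 0 0 : ℝ) : ℂ) * Ξ u 0 +
        ((Pmat M me κ lam (rr u) 0 1 : ℝ) : ℂ) * Ξ u 1)) s u

open ComplexConjugate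

lemma nonpos_of_le_of_integrableOn {α : Type*} [MeasurableSpace α] {μ : Measure α} {t : Set α}
    {N : α → ℝ} {c : ℝ} (ht : MeasurableSet t) (hμt : μ t = ⊤) (hN : IntegrableOn N t μ)
    (hcN : ∀ x ∈ t, c ≤ N x) : c ≤ 0 := by
  by_contra! hc
  have hsub : t ⊆ {x | c ≤ ‖N x‖} := fun x hx => (hcN x hx).trans (Real.le_norm_self _)
  have hfin := hN.measure_norm_ge_lt_top hc
  rw [Measure.restrict_apply' ht, inter_eq_right.2 hsub, hμt] at hfin
  exact lt_irrefl _ hfin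

lemma MonotoneOn.nonpos_of_le_of_integrableOn_Ici {F N : ℝ → ℝ} {a : ℝ}
    (hF : MonotoneOn F (Ici a)) (hN : IntegrableOn N (Ici a)) (hFN : ∀ x ∈ Ici a, F x ≤ N x)
    {x : ℝ} (hx : x ∈ Ici a) : F x ≤ 0 :=
  nonpos_of_le_of_integrableOn measurableSet_Ici Real.volume_Ici
    (hN.mono_set (Ici_subset_Ici.2 hx)) fun y hy =>
      have hya : y ∈ Ici a := mem_Ici.2 (le_trans hx hy)
      (hF hx hya hy).trans (hFN y hya)

lemma MonotoneOn.nonneg_of_neg_le_of_integrableOn_Iic {F N : ℝ → ℝ} {a : ℝ}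
    (hF : MonotoneOn F (Iic a)) (hN : IntegrableOn N (Iic a)) (hFN : ∀ x ∈ Iic a, -F x ≤ N x)
    {x : ℝ} (hx : x ∈ Iic a) : 0 ≤ F x :=
  neg_nonpos.1 <| nonpos_of_le_of_integrableOn measurableSet_Iic Real.volume_Iic
    (hN.mono_set (Iic_subset_Iic.2 hx)) fun y hy =>
      have hya : y ∈ Iic a := mem_Iic.2 (le_trans hy hx)
      (neg_le_neg (hF hya hx hy)).trans (hFN y hya)

def IsHalfLine (a : ℝ) (s : Set ℝ) : Prop := s = Ici a ∨ s = Iic a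

namespace IsHalfLine

variable {a : ℝ} {s : Set ℝ}

lemma self_mem (hs : IsHalfLine a s) : a ∈ s := by
  rcases hs with rfl | rfl
  exacts [self_mem_Ici, self_mem_Iic]

lemma convex (hs : IsHalfLine a s) : Convex ℝ s := by
  rcases hs with rfl | rfl
  exacts [convex_Ici a, convex_Iic a]

lemma measurableSet (hs : IsHalfLine a s) : MeasurableSet s := by
  rcases hs with rfl | rfl
  exacts [measurableSet_Ici, measurableSet_Iic]

lemma volume_eq_top (hs : IsHalfLine a s) : volume s = ⊤ := by
  rcases hs with rfl | rfl
  exacts [Real.volume_Ici, Real.volume_Iic]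

lemma uniqueDiffOn (hs : IsHalfLine a s) : UniqueDiffOn ℝ s := by
  rcases hs with rfl | rfl
  exacts [uniqueDiffOn_Ici a, uniqueDiffOn_Iic a]

lemma eqOn_zero_of_hasDerivWithinAt_of_abs_le {F N : ℝ → ℝ} {C : ℝ} (hs : IsHalfLine a s)
    (hF : ∀ x ∈ s, HasDerivWithinAt F (N x) s x) (hN₀ : ∀ x ∈ s, 0 ≤ N x)
    (hN : IntegrableOn N s) (hFN : ∀ x ∈ s, |F x| ≤ C * N x) (hFa : F a = 0) :
    ∀ x ∈ s, F x = 0 := by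
  have hmono : MonotoneOn F s :=
    monotoneOn_of_hasDerivWithinAt_nonneg hs.convex (fun x hx => (hF x hx).continuousWithinAt)
      (fun x hx => (hF x (interior_subset hx)).mono interior_subset)
      (fun x hx => hN₀ x (interior_subset hx))
  have hCN : IntegrableOn (fun x => C * N x) s := hN.const_mul C
  intro x hx
  rcases hs with rfl | rfl
  · refine le_antisymm ?_ (hFa ▸ hmono self_mem_Ici hx hx)
    exact hmono.nonpos_of_le_of_integrableOn_Ici hCN
      (fun y hy => (le_abs_self _).trans (hFN y hy)) hx
  · refine le_antisymm (hFa ▸ hmono hx self_mem_Iic hx) ?_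
    exact hmono.nonneg_of_neg_le_of_integrableOn_Iic hCN
      (fun y hy => (neg_le_abs _).trans (hFN y hy)) hx

lemma deriv_eqOn_zero_of_hasDerivWithinAt_of_abs_le {F N : ℝ → ℝ} {C : ℝ} (hs : IsHalfLine a s)
    (hF : ∀ x ∈ s, HasDerivWithinAt F (N x) s x) (hN₀ : ∀ x ∈ s, 0 ≤ N x)
    (hN : IntegrableOn N s) (hFN : ∀ x ∈ s, |F x| ≤ C * N x) (hFa : F a = 0) :
    ∀ x ∈ s, N x = 0 := by
  have hF₀ := hs.eqOn_zero_of_hasDerivWithinAt_of_abs_le hF hN₀ hN hFN hFa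
  intro x hx
  exact (hs.uniqueDiffOn x hx).eq_deriv s (hF x hx)
    ((hasDerivWithinAt_const x s 0).congr_of_mem hF₀ hx)

end IsHalfLine

def wronskian (Ξ₁ Ξ₂ : ℝ → Fin 2 → ℂ) (u : ℝ) : ℂ := Ξ₁ u 0 * Ξ₂ u 1 - Ξ₁ u 1 * Ξ₂ u 0

noncomputable def sqNorm (Ξ : ℝ → Fin 2 → ℂ) (u : ℝ) : ℝ := ‖Ξ u 0‖ ^ 2 + ‖Ξ u 1‖ ^ 2

lemma sqNorm_nonneg (Ξ : ℝ → Fin 2 → ℂ) (u : ℝ) : 0 ≤ sqNorm Ξ u := by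
  unfold sqNorm; positivity

lemma sqNorm_eq_zero_iff {Ξ : ℝ → Fin 2 → ℂ} {u : ℝ} : sqNorm Ξ u = 0 ↔ Ξ u = 0 := by
  simp only [sqNorm, funext_iff, Fin.forall_fin_two, Pi.zero_apply]
  constructor
  · intro h
    constructor <;> rw [← norm_eq_zero] <;> nlinarith [sq_nonneg ‖Ξ u 0‖, sq_nonneg ‖Ξ u 1‖]
  · rintro ⟨h₀, h₁⟩
    simp [h₀, h₁]

lemma sqNorm_conj (Ξ : ℝ → Fin 2 → ℂ) : sqNorm (fun u i => conj (Ξ u i)) = sqNorm Ξ := by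
  ext u
  simp only [sqNorm, Complex.norm_conj]

lemma norm_wronskian_le (Ξ₁ Ξ₂ : ℝ → Fin 2 → ℂ) (u : ℝ) :
    ‖wronskian Ξ₁ Ξ₂ u‖ ≤ (sqNorm Ξ₁ u + sqNorm Ξ₂ u) / 2 := by
  have h := norm_sub_le (Ξ₁ u 0 * Ξ₂ u 1) (Ξ₁ u 1 * Ξ₂ u 0)
  rw [norm_mul, norm_mul] at h
  rw [wronskian]
  unfold sqNorm
  nlinarith [sq_nonneg (‖Ξ₁ u 0‖ - ‖Ξ₂ u 1‖), sq_nonneg (‖Ξ₁ u 1‖ - ‖Ξ₂ u 0‖)]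

lemma sqNorm_smul_add_smul_le (a b : ℂ) (Ξ₁ Ξ₂ : ℝ → Fin 2 → ℂ) (u : ℝ) :
    sqNorm (fun v => a • Ξ₁ v + b • Ξ₂ v) u ≤
      2 * ‖a‖ ^ 2 * sqNorm Ξ₁ u + 2 * ‖b‖ ^ 2 * sqNorm Ξ₂ u := by
  have key : ∀ i, ‖a • Ξ₁ u i + b • Ξ₂ u i‖ ^ 2 ≤
      2 * ‖a‖ ^ 2 * ‖Ξ₁ u i‖ ^ 2 + 2 * ‖b‖ ^ 2 * ‖Ξ₂ u i‖ ^ 2 := by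
    intro i
    calc ‖a • Ξ₁ u i + b • Ξ₂ u i‖ ^ 2 ≤ (‖a • Ξ₁ u i‖ + ‖b • Ξ₂ u i‖) ^ 2 := by
          gcongr; exact norm_add_le _ _
      _ ≤ 2 * (‖a • Ξ₁ u i‖ ^ 2 + ‖b • Ξ₂ u i‖ ^ 2) := add_sq_le
      _ = _ := by rw [norm_smul, norm_smul]; ring
  simp only [sqNorm, Pi.add_apply, Pi.smul_apply]
  linarith [key 0, key 1]

lemma exists_smul_add_smul_eq_zero_of_det_eq_zero {K : Type*} [Field K] {x y : Fin 2 → K}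
    (h : x 0 * y 1 - x 1 * y 0 = 0) : ∃ a b : K, ¬(a = 0 ∧ b = 0) ∧ a • x + b • y = 0 := by
  obtain ⟨v, hv, hMv⟩ := (Matrix.exists_mulVec_eq_zero_iff (M := (Matrix.of ![x, y]).transpose)).2
    (by rw [Matrix.det_transpose, Matrix.det_fin_two]; simpa using h)
  refine ⟨v 0, v 1, fun h0 => hv (funext fun i => by fin_cases i <;> simp [h0.1, h0.2]), ?_⟩
  rw [Matrix.mulVec_transpose] at hMv
  ext i
  simpa [Matrix.vecMul, dotProduct, Fin.sum_univ_two, mul_comm] using congrFun hMv i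

lemma Pmat_apply_zero_one (M me κ lam r : ℝ) : Pmat M me κ lam r 0 1 = Pmat M me κ lam r 1 0 := rfl

namespace IsDiracSolutionOn

variable {M me κ lam : ℝ} {rr : ℝ → ℝ} {z z₁ z₂ : ℂ} {s : Set ℝ} {Ξ Ξ₁ Ξ₂ : ℝ → Fin 2 → ℂ}

lemma continuousOn_sqNorm (h : IsDiracSolutionOn M me κ lam rr z Ξ s) : ContinuousOn (sqNorm Ξ) s :=
  fun u hu => (((h u hu).1.continuousWithinAt.norm.pow 2).add
    ((h u hu).2.continuousWithinAt.norm.pow 2))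

lemma smul_add_smul (h₁ : IsDiracSolutionOn M me κ lam rr z Ξ₁ s)
    (h₂ : IsDiracSolutionOn M me κ lam rr z Ξ₂ s) (a b : ℂ) :
    IsDiracSolutionOn M me κ lam rr z (fun u => a • Ξ₁ u + b • Ξ₂ u) s := by
  intro u hu
  obtain ⟨h₁₀, h₁₁⟩ := h₁ u hu
  obtain ⟨h₂₀, h₂₁⟩ := h₂ u hu
  simp only [Pi.add_apply, Pi.smul_apply, smul_eq_mul]
  exact ⟨((h₁₀.const_mul a).add (h₂₀.const_mul b)).congr_deriv (by ring),
    ((h₁₁.const_mul a).add (h₂₁.const_mul b)).congr_deriv (by ring)⟩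

lemma star (h : IsDiracSolutionOn M me κ lam rr z Ξ s) :
    IsDiracSolutionOn M me κ lam rr (conj z) (fun u i => conj (Ξ u i)) s := by
  intro u hu
  obtain ⟨h₀, h₁⟩ := h u hu
  exact ⟨h₀.star.congr_deriv (by simp), h₁.star.congr_deriv (by simp)⟩

lemma hasDerivWithinAt_wronskian (h₁ : IsDiracSolutionOn M me κ lam rr z₁ Ξ₁ s)
    (h₂ : IsDiracSolutionOn M me κ lam rr z₂ Ξ₂ s) {u : ℝ} (hu : u ∈ s) :
    HasDerivWithinAt (wronskian Ξ₁ Ξ₂) ((z₁ - z₂) * (Ξ₁ u 0 * Ξ₂ u 0 + Ξ₁ u 1 * Ξ₂ u 1)) s u := by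
  obtain ⟨h₁₀, h₁₁⟩ := h₁ u hu
  obtain ⟨h₂₀, h₂₁⟩ := h₂ u hu
  refine ((h₁₀.mul h₂₁).sub (h₁₁.mul h₂₀)).congr_deriv ?_
  rw [Pmat_apply_zero_one]
  ring

lemma integrableOn_sqNorm_smul_add_smul (hs : MeasurableSet s)
    (h₁ : IsDiracSolutionOn M me κ lam rr z Ξ₁ s) (h₂ : IsDiracSolutionOn M me κ lam rr z Ξ₂ s)
    (hi₁ : IntegrableOn (sqNorm Ξ₁) s) (hi₂ : IntegrableOn (sqNorm Ξ₂) s) (a b : ℂ) :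
    IntegrableOn (sqNorm fun u => a • Ξ₁ u + b • Ξ₂ u) s :=
  ((hi₁.const_mul _).add (hi₂.const_mul _)).mono'
    ((h₁.smul_add_smul h₂ a b).continuousOn_sqNorm.aestronglyMeasurable hs)
    (Filter.Eventually.of_forall fun u => by
      rw [Real.norm_of_nonneg (sqNorm_nonneg _ u)]
      exact sqNorm_smul_add_smul_le a b Ξ₁ Ξ₂ u)

variable {a : ℝ}

lemma wronskian_eq_zero (hs : IsHalfLine a s) (h₁ : IsDiracSolutionOn M me κ lam rr z Ξ₁ s)
    (h₂ : IsDiracSolutionOn M me κ lam rr z Ξ₂ s) (hi₁ : IntegrableOn (sqNorm Ξ₁) s)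
    (hi₂ : IntegrableOn (sqNorm Ξ₂) s) {u : ℝ} (hu : u ∈ s) : wronskian Ξ₁ Ξ₂ u = 0 := by
  have hconst : ∀ v ∈ s, wronskian Ξ₁ Ξ₂ v = wronskian Ξ₁ Ξ₂ u := by
    intro v hv
    have hW₀ : ∀ x ∈ s, HasDerivWithinAt (wronskian Ξ₁ Ξ₂) 0 s x := fun x hx =>
      (h₁.hasDerivWithinAt_wronskian h₂ hx).congr_deriv (by simp)
    simpa [sub_eq_zero] using
      hs.convex.norm_image_sub_le_of_norm_hasDerivWithin_le hW₀ (fun _ _ => norm_zero.le) hu hv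
  refine norm_le_zero_iff.1 <| nonpos_of_le_of_integrableOn hs.measurableSet hs.volume_eq_top
    ((hi₁.add hi₂).div_const 2) fun v hv => ?_
  rw [← hconst v hv]
  exact norm_wronskian_le Ξ₁ Ξ₂ v

lemma eqOn_zero (hz : z.im ≠ 0) (hs : IsHalfLine a s) (h : IsDiracSolutionOn M me κ lam rr z Ξ s)
    (hi : IntegrableOn (sqNorm Ξ) s) (ha : Ξ a = 0) {u : ℝ} (hu : u ∈ s) : Ξ u = 0 := by
  set c : ℂ := conj z - z
  have hc : c ≠ 0 := fun hc => hz (by simpa [c, sub_eq_zero, Complex.conj_eq_iff_im] using hc)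
  set W := wronskian (fun v i => conj (Ξ v i)) Ξ
  have hW : ∀ v ∈ s, HasDerivWithinAt W (c * sqNorm Ξ v) s v := fun v hv => by
    refine (h.star.hasDerivWithinAt_wronskian h hv).congr_deriv ?_
    simp only [sqNorm, Complex.conj_mul']
    push_cast
    ring
  have hF : ∀ v ∈ s, HasDerivWithinAt (fun v => (W v / c).re) (sqNorm Ξ v) s v := fun v hv => by
    have := Complex.reCLM.hasFDerivAt.comp_hasDerivWithinAt v ((hW v hv).div_const c)
    rwa [mul_div_cancel_left₀ _ hc] at this
  have hFN : ∀ v ∈ s, |(W v / c).re| ≤ ‖c‖⁻¹ * sqNorm Ξ v := fun v _ => by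
    calc |(W v / c).re| ≤ ‖W v / c‖ := Complex.abs_re_le_norm _
      _ ≤ ‖c‖⁻¹ * sqNorm Ξ v := by
        rw [norm_div, div_eq_inv_mul]
        gcongr
        simpa [sqNorm_conj] using norm_wronskian_le (fun v i => conj (Ξ v i)) Ξ v
  have hFa : (W a / c).re = 0 := by simp [W, wronskian, ha]
  exact sqNorm_eq_zero_iff.1 <| hs.deriv_eqOn_zero_of_hasDerivWithinAt_of_abs_le hF
    (fun v _ => sqNorm_nonneg Ξ v) hi hFN hFa u hu

end IsDiracSolutionOn

theorem dirac_limit_point_case_general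
    (M me lam : ℝ)
    (κ : ℝ)
    (z : ℂ) (hz : z.im ≠ 0)
    (rr : ℝ → ℝ) :
    ∀ s : Set ℝ, (s = Ici (0 : ℝ) ∨ s = Iic (0 : ℝ)) →
      ∀ Ξ₁ Ξ₂ : ℝ → Fin 2 → ℂ,
        IsDiracSolutionOn M me κ lam rr z Ξ₁ s →
        IsDiracSolutionOn M me κ lam rr z Ξ₂ s →
        IntegrableOn (fun u => ‖Ξ₁ u 0‖ ^ 2 + ‖Ξ₁ u 1‖ ^ 2) s →
        IntegrableOn (fun u => ‖Ξ₂ u 0‖ ^ 2 + ‖Ξ₂ u 1‖ ^ 2) s →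
        ∃ a b : ℂ, ¬(a = 0 ∧ b = 0) ∧ ∀ u ∈ s, a • Ξ₁ u + b • Ξ₂ u = 0 := by
  intro s (hs : IsHalfLine 0 s) Ξ₁ Ξ₂ h₁ h₂ hi₁ hi₂
  obtain ⟨a, b, hab, hab₀⟩ := exists_smul_add_smul_eq_zero_of_det_eq_zero
    (h₁.wronskian_eq_zero hs h₂ hi₁ hi₂ hs.self_mem)
  exact ⟨a, b, hab, fun u hu => (h₁.smul_add_smul h₂ a b).eqOn_zero hz hs
    (h₁.integrableOn_sqNorm_smul_add_smul hs.measurableSet h₂ hi₁ hi₂ a b) hab₀ hu⟩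

/-- **limit point case at both ends.** For `Im z ≠ 0`, any two square-integrable
continuously differentiable solutions of `J Ξ′ − P(r(u)) Ξ = z Ξ` on `[0,∞)` are linearly
dependent, and likewise on `(−∞, 0]`. -/
theorem dirac_limit_point_case
    (M me lam : ℝ) (k : ℤ) (hM : 0 < M) (hme : 0 ≤ me)
    (κ : ℝ) (hκ : κ = (k : ℝ) + 1 / 2)
    (z : ℂ) (hz : z.im ≠ 0)
    (rr : ℝ → ℝ) (hrr_mem : ∀ u, rr u ∈ Ioi M)
    (hrr_right : ∀ u, tortoise M (rr u) = u)
    (hrr_left : ∀ r ∈ Ioi M, rr (tortoise M r) = r) :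
    ∀ s : Set ℝ, (s = Ici (0 : ℝ) ∨ s = Iic (0 : ℝ)) →
      ∀ Ξ₁ Ξ₂ : ℝ → Fin 2 → ℂ,
        IsDiracSolutionOn M me κ lam rr z Ξ₁ s →
        IsDiracSolutionOn M me κ lam rr z Ξ₂ s →
        IntegrableOn (fun u => ‖Ξ₁ u 0‖ ^ 2 + ‖Ξ₁ u 1‖ ^ 2) s →
        IntegrableOn (fun u => ‖Ξ₂ u 0‖ ^ 2 + ‖Ξ₂ u 1‖ ^ 2) s →
        ∃ a b : ℂ, ¬(a = 0 ∧ b = 0) ∧ ∀ u ∈ s, a • Ξ₁ u + b • Ξ₂ u = 0 :=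
  dirac_limit_point_case_general M me lam κ z hz rr
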